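/- Let G be a finite group, H = h^G a single conjugacy class of G with 1 ∉ H and H = H⁻¹, and H conjugation-invariant. Then the adjacency matrix of Cay(G,H) is singular if and only if there exists an irreducible complex character χ of G with χ(h) = 0. -/

import Mathlib

/-!
The Cayley matrix is the action of the class sum `∑_{s ∼ h} s` on the right regular representation
`G → ℂ`. The class sum commutes with `G`, so by Schur's lemma it acts on an irreducible `V` by a
scalar `c` with `c · dim V = |h^G| χ_V(h)`; hence it kills `V` iff `χ_V(h) = 0`. If the matrix is
singular, its kernel is a nonzero subrepresentation and so contains an irreducible `V`, on which the
class sum vanishes. Conversely, if the class sum kills an irreducible `V`, then a nonzero matrix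
coefficient `g ↦ ψ(g • v)` of `V` is a kernel vector, because matrix coefficients intertwine `V`
with the right regular representation.
-/

open CategoryTheory Finset TannakaDuality.FiniteGroup

universe u

lemma isConj_conj_right_iff {G : Type*} [Group G] {h s g : G} :
    IsConj h (g * s * g⁻¹) ↔ IsConj h s :=
  ⟨fun H => H.trans (isConj_iff.2 ⟨g⁻¹, by group⟩), fun H => H.trans (isConj_iff.2 ⟨g, rfl⟩)⟩

namespace Representation

section ClassSum

variable {k G V W : Type*} [Field k] [Group G] [Fintype G] [DecidableEq G]
  [AddCommGroup V] [Module k V] [AddCommGroup W] [Module k W]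

def classSum (ρ : Representation k G V) (h : G) : IntertwiningMap ρ ρ where
  toLinearMap := ∑ s with IsConj h s, ρ s
  isIntertwining' g := LinearMap.ext fun v => by
    simp only [LinearMap.comp_apply, LinearMap.sum_apply, map_sum, ← Module.End.mul_apply,
      ← map_mul]
    refine sum_equiv (MulAut.conj g⁻¹).toEquiv (fun s => ?_) (fun s _ => ?_)
    · simp only [mem_filter, mem_univ, true_and, MulEquiv.toEquiv_eq_coe, EquivLike.coe_coe,
        MulAut.conj_apply]
      exact isConj_conj_right_iff.symm
    · simp only [MulEquiv.toEquiv_eq_coe, EquivLike.coe_coe, MulAut.conj_apply]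
      group

lemma classSum_apply (ρ : Representation k G V) (h : G) (v : V) :
    ρ.classSum h v = ∑ s with IsConj h s, ρ s v :=
  LinearMap.sum_apply ..

lemma IntertwiningMap.map_classSum {ρ : Representation k G V} {σ : Representation k G W}
    (f : IntertwiningMap ρ σ) (h : G) (v : V) : f (ρ.classSum h v) = σ.classSum h (f v) := by
  simp [classSum_apply, f.isIntertwining]

end ClassSum

variable {k G : Type u} [Field k] [Group G] {V : Type*} [AddCommGroup V] [Module k V]

def matrixCoefficients (ρ : Representation k G V) (ψ : Module.Dual k V) :
    IntertwiningMap ρ rightRegular where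
  toLinearMap := LinearMap.pi fun g => ψ ∘ₗ ρ g
  isIntertwining' s := LinearMap.ext fun v => funext fun t => by simp

lemma matrixCoefficients_apply (ρ : Representation k G V) (ψ : Module.Dual k V) (v : V) (g : G) :
    ρ.matrixCoefficients ψ v g = ψ (ρ g v) :=
  rfl

end Representation

namespace Subrepresentation

variable {k G W : Type*} [Field k] [Group G] [AddCommGroup W] [Module k W]
  {ρ : Representation k G W}

def orderIsoIic (T : Subrepresentation ρ) :
    Subrepresentation T.toRepresentation ≃o Set.Iic T where
  toFun σ := ⟨⟨σ.toSubmodule.map T.toSubmodule.subtype, by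
      rintro g _ ⟨v, hv, rfl⟩
      exact ⟨_, σ.apply_mem_toSubmodule g hv, rfl⟩⟩, by
      rintro _ ⟨v, -, rfl⟩
      exact v.2⟩
  invFun τ := ⟨τ.1.toSubmodule.comap T.toSubmodule.subtype,
    fun g _ hv => τ.1.apply_mem_toSubmodule g hv⟩
  left_inv σ := by
    ext1
    exact Submodule.comap_map_eq_of_injective T.toSubmodule.injective_subtype _
  right_inv τ := by
    ext1; ext1
    exact (Submodule.map_comap_subtype _ _).trans (inf_eq_right.2 τ.2)
  map_rel_iff' := Submodule.map_le_map_iff_of_injective T.toSubmodule.injective_subtype _ _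

lemma isIrreducible_toRepresentation {T : Subrepresentation ρ} (hT : IsAtom T) :
    T.toRepresentation.IsIrreducible :=
  (orderIsoIic T).isSimpleOrder_iff.2 (Set.isSimpleOrder_Iic_iff_isAtom.2 hT)

instance [FiniteDimensional k W] : WellFoundedLT (Subrepresentation ρ) :=
  StrictMono.wellFoundedLT (f := toSubmodule) fun _ _ h => h

end Subrepresentation

theorem FDRep.simple_of_isIrreducible {k G W : Type u} [Field k] [Group G] [AddCommGroup W]
    [Module k W] [FiniteDimensional k W] (σ : Representation k G W) [σ.IsIrreducible] :
    Simple (FDRep.of σ) := by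
  have := σ.irreducible_iff_isSimpleModule_asModule.1 ‹_›
  have : Simple (Rep.equivalenceModuleMonoidAlgebra.functor.obj
      ((forget₂ (FDRep k G) (Rep k G)).obj (FDRep.of σ))) :=
    (simple_iff_isSimpleModule' _).2 this
  have := (simple_obj_iff _ _).1 this
  exact (forget₂ (FDRep k G) (Rep k G)).simple_of_simple_obj _

theorem Subrepresentation.exists_le_simple {k G W : Type u} [Field k] [Group G] [AddCommGroup W]
    [Module k W] [FiniteDimensional k W] {ρ : Representation k G W} {S : Subrepresentation ρ}
    (hS : S ≠ ⊥) : ∃ T ≤ S, Simple (FDRep.of T.toRepresentation) := by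
  obtain ⟨T, hT, hTS⟩ := (eq_bot_or_exists_atom_le S).resolve_left hS
  have := isIrreducible_toRepresentation hT
  exact ⟨T, hTS, FDRep.simple_of_isIrreducible _⟩

open Representation

namespace FDRep

variable {k G : Type u} [Field k] [Group G]

lemma nontrivial_of_simple (V : FDRep k G) [Simple V] : Nontrivial V := by
  by_contra hV
  rw [not_nontrivial_iff_subsingleton] at hV
  exact id_nonzero V
    (Action.hom_ext _ _ (FGModuleCat.hom_ext (LinearMap.ext fun _ => Subsingleton.elim _ _)))

variable [Fintype G] [DecidableEq G]

lemma trace_classSum (V : FDRep k G) (h : G) :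
    LinearMap.trace k V (classSum V.ρ h).toLinearMap = #{s | IsConj h s} * V.character h := by
  rw [classSum, map_sum, sum_congr rfl fun s hs => ?_, sum_const, nsmul_eq_mul]
  obtain ⟨c, rfl⟩ := isConj_iff.1 (mem_filter.1 hs).2
  exact V.char_conj h c

lemma exists_classSum_eq_smul_id [IsAlgClosed k] (V : FDRep k G) [Simple V] (h : G) :
    ∃ c : k, (classSum V.ρ h).toLinearMap = c • LinearMap.id := by
  obtain ⟨c, hc⟩ := endomorphism_simple_eq_smul_id k
    (forget₂HomLinearEquiv V V (Rep.ofHom (classSum V.ρ h)))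
  exact ⟨c, (congrArg (fun f => f.hom.hom.hom) hc).symm⟩

theorem classSum_eq_zero_iff [IsAlgClosed k] [CharZero k] (V : FDRep k G) [Simple V] (h : G) :
    classSum V.ρ h = 0 ↔ V.character h = 0 := by
  have htr := V.trace_classSum h
  have hcard : (#{s | IsConj h s} : k) ≠ 0 :=
    Nat.cast_ne_zero.2 (card_ne_zero.2 ⟨h, mem_filter.2 ⟨mem_univ h, .refl h⟩⟩)
  constructor
  · intro h0
    rw [h0, IntertwiningMap.zero_toLinearMap, map_zero] at htr
    exact (mul_eq_zero.1 htr.symm).resolve_left hcard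
  · intro hχ
    obtain ⟨c, hc⟩ := V.exists_classSum_eq_smul_id h
    have := V.nontrivial_of_simple
    rw [hc, hχ, mul_zero, map_smul, LinearMap.trace_id, smul_eq_mul, mul_eq_zero] at htr
    have hc0 : c = 0 := htr.resolve_right (Nat.cast_ne_zero.2 Module.finrank_pos.ne')
    ext v
    simp [hc, hc0]

end FDRep

section RightRegular

variable {k G : Type u} [Field k] [Group G] [Fintype G] [DecidableEq G]

theorem Representation.exists_simple_classSum_eq_zero {W : Type u} [AddCommGroup W] [Module k W]
    [FiniteDimensional k W] {ρ : Representation k G W} {h : G} (hker : (ρ.classSum h).ker ≠ ⊥) :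
    ∃ V : FDRep k G, Simple V ∧ classSum V.ρ h = 0 := by
  obtain ⟨T, hTS, hT⟩ := Subrepresentation.exists_le_simple hker
  refine ⟨_, hT, ?_⟩
  ext v : 2
  apply Subtype.ext
  rw [IntertwiningMap.toLinearMap_apply, classSum_apply, Submodule.coe_sum]
  exact (classSum_apply _ _ _).symm.trans (hTS v.2)

theorem Representation.exists_ne_zero_classSum_rightRegular_eq_zero {V : Type*} [AddCommGroup V]
    [Module k V] [Nontrivial V] {ρ : Representation k G V} {h : G} (hzero : ρ.classSum h = 0) :
    ∃ w : G → k, w ≠ 0 ∧ classSum (rightRegular (k := k)) h w = 0 := by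
  obtain ⟨v, hv⟩ := exists_ne (0 : V)
  obtain ⟨ψ, hψ⟩ := Module.Projective.exists_dual_ne_zero k hv
  refine ⟨matrixCoefficients ρ ψ v, fun h0 => hψ ?_, ?_⟩
  · simpa [matrixCoefficients_apply] using congrFun h0 1
  · rw [← IntertwiningMap.map_classSum, hzero]
    exact map_zero _

theorem exists_ne_zero_classSum_rightRegular_eq_zero_iff (h : G) :
    (∃ w : G → k, w ≠ 0 ∧ classSum (rightRegular (k := k)) h w = 0) ↔
      ∃ V : FDRep k G, Simple V ∧ classSum V.ρ h = 0 := by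
  constructor
  · rintro ⟨w, hw, hker⟩
    refine exists_simple_classSum_eq_zero (ρ := rightRegular) fun hbot => hw ?_
    have hwK : w ∈ (classSum (rightRegular (k := k)) h).ker := hker
    rw [hbot] at hwK
    exact (Submodule.mem_bot k).1 hwK
  · rintro ⟨V, _, hzero⟩
    have := V.nontrivial_of_simple
    exact exists_ne_zero_classSum_rightRegular_eq_zero hzero

lemma mulVec_cayley_eq_classSum_rightRegular (h : G) (w : G → k) :
    Matrix.mulVec (Matrix.of fun u v : G => if IsConj h (v * u⁻¹) then (1 : k) else 0) w =
      classSum (rightRegular (k := k)) h w := by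
  funext u
  simp only [Matrix.mulVec, dotProduct, Matrix.of_apply, ite_mul, one_mul, zero_mul,
    ← sum_filter, classSum_apply, Finset.sum_apply, rightRegular_apply]
  refine (sum_equiv (Equiv.mulLeft u) (fun s => ?_) (fun s _ => rfl)).symm
  simp only [mem_filter, mem_univ, true_and, Equiv.coe_mulLeft]
  exact isConj_conj_right_iff.symm

end RightRegular

theorem cayley_singular_iff_char_zero_of_class_general {G : Type} [Group G] [Fintype G]
    [DecidableEq G] (h : G) :
    (Matrix.of fun u v : G => if IsConj h (v * u⁻¹) then (1 : ℂ) else 0).det = 0 ↔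
      ∃ V : FDRep ℂ G, Simple V ∧ V.character h = 0 := by
  rw [← Matrix.exists_mulVec_eq_zero_iff]
  simp only [mulVec_cayley_eq_classSum_rightRegular,
    exists_ne_zero_classSum_rightRegular_eq_zero_iff]
  exact exists_congr fun V => and_congr_right fun _ => V.classSum_eq_zero_iff h

/-- For a finite group `G` and `H = h^G` a single conjugacy class with `1 ∉ H` and
`H = H⁻¹`, the Cayley graph `Cay(G,H)` is singular iff some irreducible complex
character `χ` of `G` satisfies `χ h = 0`. -/
theorem cayley_singular_iff_char_zero_of_class {G : Type} [Group G] [Fintype G]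
    [DecidableEq G] (h : G)
    (h_one : h ≠ 1)
    (h_inv : IsConj h h⁻¹) :
    (Matrix.of fun u v : G => if IsConj h (v * u⁻¹) then (1 : ℂ) else 0).det = 0 ↔
      ∃ V : FDRep ℂ G, Simple V ∧ V.character h = 0 :=
  cayley_singular_iff_char_zero_of_class_general h
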